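/- arXiv:1309.5893 — 2 statements merged into one kernel-verified Lean document; each statement's English description precedes it below -/
import Mathlib

section
/- Differentiating the Bernoulli number generating function t/(e^t − 1) = ∑_{m≥0} B_m t^m/m! yields the identity −e^{2πiz}/(e^{2πiz} − 1)^2 = 1/(2πz)^2 + ∑_{m=0}^∞ ((m−1)/m!) B_m (2πi z)^{m−2} for z in a punctured neighborhood of 0 where the series converges. -/
open Finset


lemma bern_bound (n : ℕ) :
    |((bernoulli n : ℚ) : ℝ)| / n.factorial ≤ 4 / (2 * Real.pi) ^ n := by
  have hpi := Real.pi_gt_three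
  match n with
  | 0 => norm_num
  | 1 =>
    have h : |((bernoulli 1 : ℚ) : ℝ)| = 1 / 2 := by rw [bernoulli_one]; norm_num
    rw [h]
    simp only [Nat.factorial_one, Nat.cast_one, div_one, pow_one]
    have hpi2 := Real.pi_lt_d2
    rw [div_le_div_iff₀ (by norm_num) (by positivity)]
    nlinarith
  | (n + 2) =>
    rcases Nat.even_or_odd (n + 2) with he | ho
    · -- even case
      obtain ⟨k, hk'⟩ := he
      have hk : n + 2 = 2 * k := by omega
      have hk0 : k ≠ 0 := by omega
      rw [hk]
      have hs := hasSum_zeta_nat hk0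
      set B : ℝ := ((bernoulli (2 * k) : ℚ) : ℝ) with hB
      set val : ℝ := (-1) ^ (k + 1) * 2 ^ (2 * k - 1) * Real.pi ^ (2 * k) * B / (2 * k).factorial
        with hval
      have hnn : 0 ≤ val := hs.nonneg fun n => by positivity
      have hle2 : val ≤ 2 := by
        have h1 : val ≤ Real.pi ^ 2 / 6 := by
          refine hasSum_le (fun i => ?_) hs hasSum_zeta_two
          rcases Nat.eq_zero_or_pos i with rfl | hi
          · simp [zero_pow (by omega : 2 * k ≠ 0)]
          · have h1i : (1 : ℝ) ≤ (i : ℝ) := by exact_mod_cast hi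
            have : (i : ℝ) ^ 2 ≤ (i : ℝ) ^ (2 * k) :=
              pow_le_pow_right₀ h1i (by omega)
            exact one_div_le_one_div_of_le (by positivity) this
        have := Real.pi_lt_d2
        nlinarith
      have habs : |val| = 2 ^ (2 * k - 1) * Real.pi ^ (2 * k) * (|B| / (2 * k).factorial) := by
        rw [hval, abs_div, abs_mul, abs_mul, abs_mul, abs_pow, abs_pow, abs_pow, abs_neg, abs_one,
          one_pow, one_mul, abs_two, abs_of_pos Real.pi_pos, Nat.abs_cast]
        ring
      have hkey : |B| / (2 * k).factorial = val / (2 ^ (2 * k - 1) * Real.pi ^ (2 * k)) := by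
        rw [eq_div_iff (by positivity), ← abs_of_nonneg hnn, habs]
        ring
      have hfin : |B| / (2 * k).factorial ≤ 2 / (2 ^ (2 * k - 1) * Real.pi ^ (2 * k)) := by
        rw [hkey]
        gcongr
      calc |B| / (2 * k).factorial ≤ 2 / (2 ^ (2 * k - 1) * Real.pi ^ (2 * k)) := hfin
        _ = 4 / (2 * Real.pi) ^ (2 * k) := by
            rw [mul_pow]
            have h2 : (2 : ℝ) ^ (2 * k) = 2 * 2 ^ (2 * k - 1) := by
              rw [← pow_succ']
              congr 1
              omega
            rw [h2]
            ring
    · -- odd case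
      have : bernoulli (n + 2) = 0 := by
        rw [bernoulli_eq_bernoulli'_of_ne_one (by omega)]
        exact bernoulli'_eq_zero_of_odd ho (by omega)
      rw [this]
      simp
      positivity




noncomputable def bernGF (n : ℕ) : ℂ := ((bernoulli n : ℚ) : ℂ) / n.factorial

lemma bernGF_norm_le (n : ℕ) : ‖bernGF n‖ ≤ 4 / (2 * Real.pi) ^ n := by
  rw [bernGF, norm_div, Complex.norm_natCast]
  have : ‖((bernoulli n : ℚ) : ℂ)‖ = |((bernoulli n : ℚ) : ℝ)| := by
    rw [show ((bernoulli n : ℚ) : ℂ) = (((bernoulli n : ℚ) : ℝ) : ℂ) by push_cast; ring,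
      Complex.norm_real, Real.norm_eq_abs]
  rw [this]
  exact bern_bound n

lemma bernGF_norm_summable {y : ℂ} (hy : ‖y‖ < 2 * Real.pi) :
    Summable fun n => ‖bernGF n * y ^ n‖ := by
  have hpi := Real.pi_pos
  have hgeom : Summable fun n : ℕ => 4 * (‖y‖ / (2 * Real.pi)) ^ n := by
    refine (summable_geometric_of_lt_one (by positivity) ?_).mul_left 4
    rw [div_lt_one (by positivity)]
    exact hy
  refine Summable.of_nonneg_of_le (fun n => norm_nonneg _) (fun n => ?_) hgeom
  rw [norm_mul, norm_pow, div_pow]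
  calc ‖bernGF n‖ * ‖y‖ ^ n ≤ 4 / (2 * Real.pi) ^ n * ‖y‖ ^ n :=
        mul_le_mul_of_nonneg_right (bernGF_norm_le n) (by positivity)
    _ = 4 * (‖y‖ ^ n / (2 * Real.pi) ^ n) := by ring

lemma exp_sub_one_ne_zero {y : ℂ} (hy0 : y ≠ 0) (hy : ‖y‖ < 2 * Real.pi) :
    Complex.exp y - 1 ≠ 0 := by
  rw [sub_ne_zero]
  intro h
  obtain ⟨n, hn⟩ := Complex.exp_eq_one_iff.mp h
  have hn0 : n ≠ 0 := by
    rintro rfl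
    rw [hn] at hy0
    simp at hy0
  have h1 : (1 : ℝ) ≤ |(n : ℝ)| := by
    rw [← Int.cast_abs]
    exact_mod_cast Int.one_le_abs (by omega)
  have hnorm : ‖y‖ = |(n : ℝ)| * (2 * Real.pi) := by
    rw [hn, norm_mul, Complex.norm_intCast]
    congr 1
    simp [norm_mul, Complex.norm_real, abs_of_pos Real.pi_pos]
  rw [hnorm] at hy
  nlinarith [Real.pi_pos]

lemma hasSum_bernGF {y : ℂ} (hy0 : y ≠ 0) (hy : ‖y‖ < 2 * Real.pi) :
    HasSum (fun n => bernGF n * y ^ n) (y / (Complex.exp y - 1)) := by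
  have hne : Complex.exp y - 1 ≠ 0 := exp_sub_one_ne_zero hy0 hy
  -- exponential series
  have he : HasSum (fun n => y ^ n / (n.factorial : ℂ)) (Complex.exp y) := by
    rw [Complex.exp_eq_exp_ℂ]
    exact NormedSpace.expSeries_div_hasSum_exp y
  have he1 : HasSum (fun n => y ^ (n + 1) / ((n + 1).factorial : ℂ)) (Complex.exp y - 1) := by
    have := (hasSum_nat_add_iff' (f := fun n => y ^ n / (n.factorial : ℂ)) 1).mpr he
    simpa using this
  have hE : HasSum (fun n => y ^ n / ((n + 1).factorial : ℂ)) ((Complex.exp y - 1) / y) := by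
    have h2 := he1.div_const y
    have hfun : (fun n => y ^ (n + 1) / ((n + 1).factorial : ℂ) / y)
        = fun n => y ^ n / ((n + 1).factorial : ℂ) := by
      funext n
      have h3 : y ^ (n + 1) / ((n + 1).factorial : ℂ) / y
          = y ^ n * (y / y) / ((n + 1).factorial : ℂ) := by ring
      rw [h3, div_self hy0, mul_one]
    rwa [hfun] at h2
  -- norm summabilities
  have hnA : Summable fun n => ‖bernGF n * y ^ n‖ := bernGF_norm_summable hy
  have hnE : Summable fun n => ‖y ^ n / ((n + 1).factorial : ℂ)‖ := by
    refine Summable.of_nonneg_of_le (fun n => norm_nonneg _) (fun n => ?_)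
      (Real.summable_pow_div_factorial ‖y‖)
    rw [norm_div, norm_pow, Complex.norm_natCast]
    gcongr
    exact Nat.le_succ n
  -- Cauchy product
  have hprod := tsum_mul_tsum_eq_tsum_sum_antidiagonal_of_summable_norm hnA hnE
  have hinner : ∀ n : ℕ, (∑ kl ∈ antidiagonal n,
      (bernGF kl.1 * y ^ kl.1) * (y ^ kl.2 / ((kl.2 + 1).factorial : ℂ)))
      = if n = 0 then 1 else 0 := by
    intro n
    have h1 : ∀ kl ∈ antidiagonal n, (bernGF kl.1 * y ^ kl.1) * (y ^ kl.2 / ((kl.2 + 1).factorial : ℂ))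
        = (bernGF kl.1 / ((kl.2 + 1).factorial : ℂ)) * y ^ n := by
      intro kl hkl
      rw [← Finset.HasAntidiagonal.mem_antidiagonal.mp hkl, pow_add]
      ring
    rw [Finset.sum_congr rfl h1, ← Finset.sum_mul]
    have h2 : (∑ kl ∈ antidiagonal n, bernGF kl.1 / ((kl.2 + 1).factorial : ℂ))
        = if n = 0 then 1 else 0 := by
      rw [Finset.Nat.sum_antidiagonal_eq_sum_range_succ_mk]
      have key : ∀ i ∈ range (n + 1), bernGF i / (((n - i) + 1).factorial : ℂ)
          = ((n + 1).choose i : ℂ) * ((bernoulli i : ℚ) : ℂ) / ((n + 1).factorial : ℂ) := by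
        intro i hi
        have hi' : i ≤ n := Nat.lt_succ_iff.mp (mem_range.mp hi)
        have hni : n - i + 1 = n + 1 - i := by omega
        have hch : (n + 1).choose i * i.factorial * ((n + 1 - i).factorial) = (n + 1).factorial :=
          Nat.choose_mul_factorial_mul_factorial (by omega)
        rw [bernGF, hni]
        have hf1 : ((i.factorial : ℂ)) * (((n + 1 - i).factorial : ℂ)) ≠ 0 :=
          mul_ne_zero (Nat.cast_ne_zero.mpr (Nat.factorial_ne_zero _))
            (Nat.cast_ne_zero.mpr (Nat.factorial_ne_zero _))
        have hf2 : (((n + 1).factorial : ℂ)) ≠ 0 := Nat.cast_ne_zero.mpr (Nat.factorial_ne_zero _)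
        rw [div_div, div_eq_div_iff hf1 hf2]
        rw [show ((i.factorial : ℂ) * ((n + 1 - i).factorial : ℂ)) = (((i.factorial * (n + 1 - i).factorial : ℕ)) : ℂ) by push_cast; ring]
        rw [show ((n + 1).choose i : ℂ) * ((bernoulli i : ℚ) : ℂ) * ((i.factorial * (n + 1 - i).factorial : ℕ) : ℂ)
          = ((bernoulli i : ℚ) : ℂ) * (((n + 1).choose i * i.factorial * (n + 1 - i).factorial : ℕ) : ℂ) by push_cast; ring]
        rw [hch]
      rw [Finset.sum_congr rfl key, ← Finset.sum_div]
      have hc : (∑ i ∈ range (n + 1), ((n + 1).choose i : ℂ) * ((bernoulli i : ℚ) : ℂ))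
          = if n = 0 then 1 else 0 := by
        have h := congrArg (fun q : ℚ => (q : ℂ)) (sum_bernoulli (n + 1))
        push_cast at h
        rcases eq_or_ne n 0 with rfl | hn
        · simpa using h
        · simp only [if_neg (by omega : n + 1 ≠ 1), if_neg hn] at h ⊢
          exact_mod_cast h
      rw [hc]
      rcases eq_or_ne n 0 with rfl | hn
      · simp
      · simp [hn]
    rw [h2]
    rcases eq_or_ne n 0 with rfl | hn
    · simp
    · simp [hn]
  have hT : (∑' n, bernGF n * y ^ n) * ((Complex.exp y - 1) / y) = 1 := by
    rw [← hE.tsum_eq, hprod, tsum_congr hinner]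
    exact tsum_ite_eq 0 (fun _ => (1 : ℂ))
  have hTval : (∑' n, bernGF n * y ^ n) = y / (Complex.exp y - 1) := by
    have hEne : (Complex.exp y - 1) / y ≠ 0 := div_ne_zero hne hy0
    field_simp at hT ⊢
    linear_combination hT
  exact (hnA.of_norm.hasSum_iff).mpr hTval



lemma hasSum_bernGF_deriv {w : ℂ} (hw0 : w ≠ 0) (hw : ‖w‖ < 2 * Real.pi) :
    HasSum (fun n : ℕ => (n : ℂ) * bernGF n * w ^ (n - 1))
      ((Complex.exp w - 1 - w * Complex.exp w) / (Complex.exp w - 1) ^ 2) := by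
  have hpi := Real.pi_pos
  obtain ⟨r, hrw, hr2⟩ : ∃ r : ℝ, ‖w‖ < r ∧ r < 2 * Real.pi :=
    ⟨(‖w‖ + 2 * Real.pi) / 2, by linarith, by linarith [norm_nonneg w]⟩
  have hr0 : 0 < r := lt_of_le_of_lt (norm_nonneg w) hrw
  have hq0 : 0 ≤ r / (2 * Real.pi) := by positivity
  have hq1 : r / (2 * Real.pi) < 1 := by rw [div_lt_one (by positivity)]; exact hr2
  have husum : Summable (fun n : ℕ => 4 / r * ((n : ℝ) * (r / (2 * Real.pi)) ^ n)) := by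
    have := summable_pow_mul_geometric_of_norm_lt_one (R := ℝ) 1
      (r := r / (2 * Real.pi)) (by rwa [Real.norm_eq_abs, abs_of_nonneg hq0])
    simpa using this.mul_left (4 / r)
  have hderiv : ∀ (n : ℕ), ∀ y ∈ Metric.ball (0 : ℂ) r,
      HasDerivAt (fun z : ℂ => bernGF n * z ^ n) ((n : ℂ) * bernGF n * y ^ (n - 1)) y := by
    intro n y _
    have := (hasDerivAt_pow n y).const_mul (bernGF n)
    rw [show (n : ℂ) * bernGF n * y ^ (n - 1) = bernGF n * (↑n * y ^ (n - 1)) by ring]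
    exact this
  have hbound : ∀ (n : ℕ), ∀ y ∈ Metric.ball (0 : ℂ) r,
      ‖(n : ℂ) * bernGF n * y ^ (n - 1)‖ ≤ 4 / r * ((n : ℝ) * (r / (2 * Real.pi)) ^ n) := by
    intro n y hy
    have hyr : ‖y‖ ≤ r := by
      rw [Metric.mem_ball, dist_zero_right] at hy
      exact hy.le
    match n with
    | 0 => simp
    | (m + 1) =>
      rw [norm_mul, norm_mul, norm_pow, Complex.norm_natCast, Nat.add_sub_cancel]
      calc ((m + 1 : ℕ) : ℝ) * ‖bernGF (m + 1)‖ * ‖y‖ ^ m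
          ≤ ((m + 1 : ℕ) : ℝ) * (4 / (2 * Real.pi) ^ (m + 1)) * r ^ m := by
            refine mul_le_mul (mul_le_mul_of_nonneg_left (bernGF_norm_le _) (by positivity))
              (pow_le_pow_left₀ (norm_nonneg y) hyr m) (by positivity) (by positivity)
        _ = 4 / r * (((m + 1 : ℕ) : ℝ) * (r / (2 * Real.pi)) ^ (m + 1)) := by
            rw [div_pow]
            field_simp
            ring
  have hball0 : (0 : ℂ) ∈ Metric.ball (0 : ℂ) r := Metric.mem_ball_self hr0
  have hballw : w ∈ Metric.ball (0 : ℂ) r := by rwa [Metric.mem_ball, dist_zero_right]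
  have hsum0 : Summable fun n => bernGF n * (0 : ℂ) ^ n :=
    (bernGF_norm_summable (by simpa using by positivity : ‖(0 : ℂ)‖ < 2 * Real.pi)).of_norm
  have hD := hasDerivAt_tsum_of_isPreconnected husum Metric.isOpen_ball
    (convex_ball (0 : ℂ) r).isPreconnected hderiv hbound hball0 hsum0 hballw
  -- identify the function with z / (exp z - 1) near w
  have heq : (fun z : ℂ => z / (Complex.exp z - 1)) =ᶠ[nhds w]
      (fun z : ℂ => ∑' n, bernGF n * z ^ n) := by
    have hopen : IsOpen {z : ℂ | z ≠ 0 ∧ ‖z‖ < 2 * Real.pi} := by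
      have h1 : IsOpen {z : ℂ | z ≠ 0} := isOpen_ne
      have h2 : IsOpen {z : ℂ | ‖z‖ < 2 * Real.pi} := by
        simpa [Metric.ball, dist_zero_right] using Metric.isOpen_ball (x := (0:ℂ)) (ε := 2 * Real.pi)
      exact h1.inter h2
    filter_upwards [hopen.mem_nhds ⟨hw0, hw⟩] with z hz
    exact ((hasSum_bernGF hz.1 hz.2).tsum_eq).symm
  have hD2 : HasDerivAt (fun z : ℂ => z / (Complex.exp z - 1))
      (∑' (n : ℕ), (n : ℂ) * bernGF n * w ^ (n - 1)) w := hD.congr_of_eventuallyEq heq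
  have hne : Complex.exp w - 1 ≠ 0 := exp_sub_one_ne_zero hw0 hw
  have hD3 : HasDerivAt (fun z : ℂ => z / (Complex.exp z - 1))
      ((1 * (Complex.exp w - 1) - w * Complex.exp w) / (Complex.exp w - 1) ^ 2) w := by
    have h1 : HasDerivAt (fun z : ℂ => z) 1 w := hasDerivAt_id w
    have h2 : HasDerivAt (fun z : ℂ => Complex.exp z - 1) (Complex.exp w) w :=
      (Complex.hasDerivAt_exp w).sub_const 1
    exact h1.div h2 hne
  have hval : (∑' (n : ℕ), (n : ℂ) * bernGF n * w ^ (n - 1))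
      = (Complex.exp w - 1 - w * Complex.exp w) / (Complex.exp w - 1) ^ 2 := by
    rw [hD2.unique hD3]
    ring_nf
  have hsummable : Summable fun n : ℕ => (n : ℂ) * bernGF n * w ^ (n - 1) :=
    Summable.of_norm_bounded husum (fun n => hbound n w hballw)
  exact hsummable.hasSum_iff.mpr hval


lemma bernGF_key1 (v : ℂ) (hv : v ≠ 0) (m : ℕ) :
    (((m : ℂ) + 1) - 1) / ((m + 1).factorial : ℂ) * ((bernoulli (m + 1) : ℚ) : ℂ) * (v ^ m / v)
      = ((m : ℂ) + 1) * bernGF (m + 1) * v ^ m / v - bernGF (m + 1) * v ^ (m + 1) / v ^ 2 := by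
  have hfac : ((m + 1).factorial : ℂ) ≠ 0 := Nat.cast_ne_zero.mpr (Nat.factorial_ne_zero _)
  rw [bernGF]
  field_simp
  ring

lemma bernGF_key2 (v e : ℂ) (hv : v ≠ 0) (he : e - 1 ≠ 0) :
    (e - 1 - v * e) / (e - 1) ^ 2 / v - (v / (e - 1) - 1) / v ^ 2
      = -e / (e - 1) ^ 2 + 1 / v ^ 2 := by
  field_simp
  ring


/-- Differentiating the Bernoulli generating function:
−e^{2πiz}/(e^{2πiz}−1)² = 1/(2πz)² + ∑_{m≥1} ((m−1)/m!) B_m (2πiz)^{m−2}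
for 0 < |z| < 1. -/
theorem stmt_3 (z : ℂ) (hz0 : z ≠ 0) (hz1 : ‖z‖ < 1) :
    HasSum (fun m : ℕ =>
        (((m : ℂ) + 1) - 1) / ((m + 1).factorial : ℂ) * ((bernoulli (m + 1) : ℚ) : ℂ) *
          (2 * (Real.pi : ℂ) * Complex.I * z) ^ ((m : ℤ) + 1 - 2))
      (-Complex.exp (2 * (Real.pi : ℂ) * Complex.I * z) /
          (Complex.exp (2 * (Real.pi : ℂ) * Complex.I * z) - 1) ^ 2 -
        1 / (2 * (Real.pi : ℂ) * z) ^ 2) := by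
  have hpi := Real.pi_pos
  set w : ℂ := 2 * (Real.pi : ℂ) * Complex.I * z with hwdef
  have hw0 : w ≠ 0 := by
    rw [hwdef]
    apply mul_ne_zero (mul_ne_zero (mul_ne_zero two_ne_zero ?_) Complex.I_ne_zero) hz0
    exact_mod_cast Complex.ofReal_ne_zero.mpr Real.pi_ne_zero
  have hwn : ‖w‖ < 2 * Real.pi := by
    rw [hwdef]
    rw [norm_mul, norm_mul, norm_mul, Complex.norm_I, Complex.norm_real]
    simp only [Complex.norm_ofNat, Real.norm_eq_abs, abs_of_pos Real.pi_pos, mul_one]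
    have h1 : ‖z‖ < 1 := hz1
    nlinarith [norm_nonneg z]
  have hne : Complex.exp w - 1 ≠ 0 := exp_sub_one_ne_zero hw0 hwn
  have hfac : ∀ m : ℕ, ((m + 1).factorial : ℂ) ≠ 0 :=
    fun m => Nat.cast_ne_zero.mpr (Nat.factorial_ne_zero _)
  -- shifted derivative series
  have hs1 : HasSum (fun m : ℕ => ((m : ℂ) + 1) * bernGF (m + 1) * w ^ m)
      ((Complex.exp w - 1 - w * Complex.exp w) / (Complex.exp w - 1) ^ 2) := by
    have h := (hasSum_nat_add_iff'
      (f := fun n : ℕ => (n : ℂ) * bernGF n * w ^ (n - 1)) 1).mpr (hasSum_bernGF_deriv hw0 hwn)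
    simp only [range_one, sum_singleton, Nat.cast_zero, zero_mul, sub_zero,
      Nat.add_sub_cancel, Nat.cast_add, Nat.cast_one] at h
    convert h using 1
  -- shifted generating series
  have hs2 : HasSum (fun m : ℕ => bernGF (m + 1) * w ^ (m + 1))
      (w / (Complex.exp w - 1) - 1) := by
    have h := (hasSum_nat_add_iff'
      (f := fun n : ℕ => bernGF n * w ^ n) 1).mpr (hasSum_bernGF hw0 hwn)
    simpa [bernGF] using h
  have combined := (hs1.div_const w).sub (hs2.div_const (w ^ 2))
  -- term identification
  have hterm : (fun m : ℕ =>
      (((m : ℂ) + 1) - 1) / ((m + 1).factorial : ℂ) * ((bernoulli (m + 1) : ℚ) : ℂ) *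
        w ^ ((m : ℤ) + 1 - 2))
      = fun m : ℕ => ((m : ℂ) + 1) * bernGF (m + 1) * w ^ m / w
        - bernGF (m + 1) * w ^ (m + 1) / w ^ 2 := by
    funext m
    have hzp : w ^ ((m : ℤ) + 1 - 2) = w ^ m / w := by
      rw [show (m : ℤ) + 1 - 2 = (m : ℤ) - 1 by ring, zpow_sub₀ hw0, zpow_natCast, zpow_one]
    rw [hzp]
    exact bernGF_key1 w hw0 m
  -- value identification
  have hsq : (2 * (Real.pi : ℂ) * z) ^ 2 = -w ^ 2 := by
    rw [hwdef, show (2 * (Real.pi : ℂ) * Complex.I * z) ^ 2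
      = Complex.I ^ 2 * (2 * (Real.pi : ℂ) * z) ^ 2 by ring, Complex.I_sq]
    ring
  have hval : -Complex.exp w / (Complex.exp w - 1) ^ 2 - 1 / (2 * (Real.pi : ℂ) * z) ^ 2
      = (Complex.exp w - 1 - w * Complex.exp w) / (Complex.exp w - 1) ^ 2 / w
        - (w / (Complex.exp w - 1) - 1) / w ^ 2 := by
    rw [hsq, div_neg, bernGF_key2 w (Complex.exp w) hw0 hne]
    ring
  rw [hterm, hval]
  exact combined
end

section
/- Let Γ be a finite connected bridgeless multigraph with at least one edge. Then Γ admits an orientation of its edges and strictly positive integer weights on its edges such that at every vertex the total incoming weight equals the total outgoing weight. -/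
open Finset

section Aux

variable {V E : Type} [Fintype V] [Fintype E] [DecidableEq V] [DecidableEq E]
  (s t : E → V)

/-- divergence of a flow wrt the reference orientation s → t -/
def divAux (f : E → ℤ) (v : V) : ℤ :=
  ∑ e : E, f e * ((if t e = v then 1 else 0) - (if s e = v then 1 else 0))

lemma divAux_add (f g : E → ℤ) (v : V) :
    divAux s t (f + g) v = divAux s t f v + divAux s t g v := by
  simp [divAux, add_mul, Finset.sum_add_distrib]

lemma divAux_delta (e : E) (c : ℤ) (v : V) :
    divAux s t (fun e' => if e' = e then c else 0) v
      = c * ((if t e = v then 1 else 0) - (if s e = v then 1 else 0)) := by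
  rw [divAux, Finset.sum_eq_single e]
  · simp
  · intro b _ hb; simp [hb]
  · simp

lemma pathflow (e₀ : E) {a b : V}
    (h : Relation.ReflTransGen
      (fun a b => ∃ e, e ≠ e₀ ∧ ((s e = a ∧ t e = b) ∨ (s e = b ∧ t e = a))) a b) :
    ∃ g : E → ℤ, g e₀ = 0 ∧
      ∀ v, divAux s t g v = (if b = v then 1 else 0) - (if a = v then 1 else 0) := by
  induction h with
  | refl => exact ⟨0, rfl, by simp [divAux]⟩
  | @tail b c _ hbc ih =>
    obtain ⟨g, hg0, hgv⟩ := ih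
    obtain ⟨e, hne, hcase⟩ := hbc
    rcases hcase with ⟨hs, ht⟩ | ⟨hs, ht⟩
    · refine ⟨g + fun e' => if e' = e then 1 else 0, by simp [hne.symm, hg0], ?_⟩
      intro v
      rw [divAux_add, divAux_delta, hgv v, hs, ht]
      split_ifs <;> omega
    · refine ⟨g + fun e' => if e' = e then -1 else 0, by simp [hne.symm, hg0], ?_⟩
      intro v
      rw [divAux_add, divAux_delta, hgv v, hs, ht]
      split_ifs <;> omega

lemma unitflow (e₀ : E)
    (hbridgeless : ∀ v w : V, Relation.ReflTransGen
      (fun a b => ∃ e, e ≠ e₀ ∧ ((s e = a ∧ t e = b) ∨ (s e = b ∧ t e = a))) v w) :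
    ∃ f : E → ℤ, f e₀ = 1 ∧ ∀ v, divAux s t f v = 0 := by
  obtain ⟨g, hg0, hgv⟩ := pathflow s t e₀ (hbridgeless (t e₀) (s e₀))
  refine ⟨g + fun e' => if e' = e₀ then 1 else 0, by simp [hg0], ?_⟩
  intro v
  rw [divAux_add, divAux_delta, hgv v]
  split_ifs <;> omega

lemma combine (hbridgeless : ∀ e₀ : E, ∀ v w : V, Relation.ReflTransGen
      (fun a b => ∃ e, e ≠ e₀ ∧ ((s e = a ∧ t e = b) ∨ (s e = b ∧ t e = a))) v w)
    (L : List E) :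
    ∃ f : E → ℤ, (∀ v, divAux s t f v = 0) ∧ ∀ e ∈ L, f e ≠ 0 := by
  induction L with
  | nil => exact ⟨0, by simp [divAux], by simp⟩
  | cons e L ih =>
    obtain ⟨g, hgdiv, hgL⟩ := ih
    obtain ⟨u, hu1, hudiv⟩ := unitflow s t e (hbridgeless e)
    set c : ℤ := 1 + ∑ e' : E, |g e'| with hc
    have hcpos : ∀ e' : E, |g e'| < c := by
      intro e'
      have h1 : |g e'| ≤ ∑ e'' : E, |g e''| :=
        Finset.single_le_sum (f := fun e'' => |g e''|) (fun i _ => abs_nonneg _)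
          (Finset.mem_univ e')
      omega
    refine ⟨c • u + g, ?_, ?_⟩
    · intro v
      rw [divAux_add, hgdiv]
      have : divAux s t (c • u) v = c * divAux s t u v := by
        simp [divAux, Finset.mul_sum, mul_assoc]
      rw [this, hudiv]; ring
    · intro e' he'
      rcases List.mem_cons.mp he' with rfl | hmem
      · have := hcpos e'
        simp only [Pi.add_apply, Pi.smul_apply, hu1, smul_eq_mul, mul_one]
        have := abs_lt.mp this
        omega
      · by_cases hu : u e' = 0
        · simpa [hu] using hgL e' hmem
        · have h1 : 1 ≤ |u e'| := by have := abs_pos.mpr hu; omega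
          have h2 : |g e'| < c := hcpos e'
          have h3 : c ≤ c * |u e'| := le_mul_of_one_le_right (by positivity) h1
          intro hzero
          simp only [Pi.add_apply, Pi.smul_apply, smul_eq_mul] at hzero
          have : c * u e' = - g e' := by omega
          have : |c * u e'| = |g e'| := by rw [this, abs_neg]
          rw [abs_mul, abs_of_pos (by positivity : (0:ℤ) < c)] at this
          omega

end Aux

/-- A finite connected bridgeless multigraph with at least one edge admits an
orientation with strictly positive integer weights balanced at every vertex. -/
theorem stmt_6 {V E : Type} [Fintype V] [Fintype E] [DecidableEq V]
    (s t : E → V) (hE : Nonempty E)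
    (hconn : ∀ v w : V, Relation.ReflTransGen
      (fun a b => ∃ e, (s e = a ∧ t e = b) ∨ (s e = b ∧ t e = a)) v w)
    (hbridgeless : ∀ e₀ : E, ∀ v w : V, Relation.ReflTransGen
      (fun a b => ∃ e, e ≠ e₀ ∧ ((s e = a ∧ t e = b) ∨ (s e = b ∧ t e = a))) v w) :
    ∃ (o : E → Bool) (wt : E → ℤ), (∀ e, 0 < wt e) ∧
      ∀ v : V, (∑ e : E, if (if o e then t e else s e) = v then wt e else 0)
             = (∑ e : E, if (if o e then s e else t e) = v then wt e else 0) := by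
  classical
  obtain ⟨f, hdiv, hnz⟩ := combine s t hbridgeless Finset.univ.toList
  have hnz' : ∀ e, f e ≠ 0 := fun e => hnz e (Finset.mem_toList.mpr (Finset.mem_univ e))
  refine ⟨fun e => decide (0 < f e), fun e => |f e|, fun e => abs_pos.mpr (hnz' e), ?_⟩
  intro v
  have key : (∑ e : E, if (if decide (0 < f e) then t e else s e) = v then |f e| else 0)
      - (∑ e : E, if (if decide (0 < f e) then s e else t e) = v then |f e| else 0)
      = divAux s t f v := by
    rw [← Finset.sum_sub_distrib, divAux]
    refine Finset.sum_congr rfl fun e _ => ?_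
    by_cases h : 0 < f e
    · have hb : decide (0 < f e) = true := by simp [h]
      simp only [hb, if_true, abs_of_pos h]
      split_ifs <;> ring
    · have hb : decide (0 < f e) = false := by simp [h]
      simp only [hb, Bool.false_eq_true, if_false, abs_of_nonpos (not_lt.mp h)]
      split_ifs <;> ring
  have := hdiv v
  beta_reduce
  omega
end
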